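/- Let S ⊂ ℝ² be a convex open subset of the open upper half-disk B₁⁺ whose boundary, intersected with ∂B₁⁺, contains no arc of positive length on the upper semicircle ∂B₁ ∩ {y > 0} and neither of the two segments {(x,0) : 0 < x < 1}, {(x,0) : −1 < x < 0}. Suppose ∂S ∩ B₁⁺ = γ₂ ∪ γ₃ with H¹(γ₂) ≥ H¹(γ₃), and σ₁₂, σ₁₃, σ₂₃ > 0 satisfy the strict triangle inequality σ₂₃ < σ₁₂ + σ₁₃. Then σ₂₃·H¹(γ₃) − σ₁₂·H¹(γ₂) − σ₁₃·H¹(γ₃) < 0. -/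

import Mathlib

open Real MeasureTheory

noncomputable section

/-- The open upper half unit disk `B₁⁺`. -/
def halfDisk : Set (EuclideanSpace ℝ (Fin 2)) := {z | ‖z‖ < 1 ∧ 0 < z 1}

/-- The open upper unit semicircle `∂B₁ ∩ {y > 0}`. -/
def upperSemicircle : Set (EuclideanSpace ℝ (Fin 2)) := {z | ‖z‖ = 1 ∧ 0 < z 1}

/-- The segment `{(x,0) : 0 < x < 1}`. -/
def posSegment : Set (EuclideanSpace ℝ (Fin 2)) := {z | z 1 = 0 ∧ 0 < z 0 ∧ z 0 < 1}

/-- The segment `{(x,0) : −1 < x < 0}`. -/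
def negSegment : Set (EuclideanSpace ℝ (Fin 2)) := {z | z 1 = 0 ∧ -1 < z 0 ∧ z 0 < 0}

open Metric Set
open scoped ENNReal RealInnerProductSpace

/-! The quantity equals `-(σ₁₂ + σ₁₃ - σ₂₃) H¹(γ₃) - σ₁₂ (H¹(γ₂) - H¹(γ₃))`, so it is negative as
soon as `H¹(γ₂ ∪ γ₃)` is finite and positive (`toReal` would send `∞` to `0`).

Finiteness: the nearest-point projection onto the closed convex set `closure S` is 1-Lipschitz,
and each frontier point `x` is the projection of every point on an outer normal ray at `x` (from
a supporting hyperplane), in particular of a point of a circle enclosing `S`. Hence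
`H¹(∂S) ≤ H¹(circle) < ∞`.

Positivity: every vertical line through a ball `B(p, ε) ⊆ S` leaves the bounded set `S` upwards,
so it meets `∂S` above `p`. The projection of `∂S ∩ {y > 0}` to the `x`-axis thus covers an
interval of length `2ε`; since `∂S ∩ {y > 0}` lies in `γ₂ ∪ γ₃` up to the `H¹`-null part on the
semicircle, `H¹(γ₂ ∪ γ₃) ≥ 2ε`. -/

section InnerProduct

variable {F : Type*} [NormedAddCommGroup F] [InnerProductSpace ℝ F]

theorem norm_sub_le_of_inner_sub_nonpos {x y a b : F} (ha : ⟪x - a, b - a⟫ ≤ 0)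
    (hb : ⟪y - b, a - b⟫ ≤ 0) : ‖a - b‖ ≤ ‖x - y‖ := by
  have hsq : ‖a - b‖ ^ 2 ≤ ⟪x - y, a - b⟫ := by
    have h : ⟪x - y, a - b⟫ - ‖a - b‖ ^ 2 = -⟪x - a, b - a⟫ - ⟪y - b, a - b⟫ := by
      rw [← real_inner_self_eq_norm_sq]
      simp only [inner_sub_left, inner_sub_right, real_inner_comm]
      ring
    linarith
  have hcs := real_inner_le_norm (x - y) (a - b)
  nlinarith [norm_nonneg (a - b), norm_nonneg (x - y)]

theorem exists_lipschitzWith_one_nearestPoint [CompleteSpace F] {K : Set F} (hne : K.Nonempty)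
    (hcl : IsClosed K) (hconv : Convex ℝ K) :
    ∃ P : F → F, LipschitzWith 1 P ∧ ∀ u, P u ∈ K ∧ ∀ w ∈ K, ⟪u - P u, w - P u⟫ ≤ 0 := by
  have h : ∀ u, ∃ v ∈ K, ∀ w ∈ K, ⟪u - v, w - v⟫ ≤ 0 := fun u => by
    obtain ⟨v, hv, hmin⟩ := exists_norm_eq_iInf_of_complete_convex hne hcl.isComplete hconv u
    exact ⟨v, hv, (norm_eq_iInf_iff_real_inner_le_zero hconv hv).1 hmin⟩
  choose P hPK hP using h
  refine ⟨P, LipschitzWith.of_dist_le_mul fun x y => ?_, fun u => ⟨hPK u, hP u⟩⟩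
  simpa [dist_eq_norm] using norm_sub_le_of_inner_sub_nonpos (hP x _ (hPK y)) (hP y _ (hPK x))

theorem exists_lipschitzWith_one_frontier_subset_image_sphere [CompleteSpace F] {S : Set F} (hconv : Convex ℝ S)
    (hopen : IsOpen S) {r : ℝ} (hS : S ⊆ closedBall 0 r) :
    ∃ P : F → F, LipschitzWith 1 P ∧ frontier S ⊆ P '' sphere 0 r := by
  rcases S.eq_empty_or_nonempty with rfl | hne
  · exact ⟨id, LipschitzWith.id, by simp⟩
  obtain ⟨P, hPlip, hP⟩ :=
    exists_lipschitzWith_one_nearestPoint hne.closure isClosed_closure hconv.closure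
  refine ⟨P, hPlip, fun x hx => ?_⟩
  have hxS : x ∉ S := fun h => (hopen.inter_frontier_eq).subset ⟨h, hx⟩
  have hxK : x ∈ closure S := frontier_subset_closure hx
  obtain ⟨f, hf⟩ := geometric_hahn_banach_open_point hconv hopen hxS
  set n := (InnerProductSpace.toDual ℝ F).symm f
  have hn : ∀ w, ⟪n, w⟫ = f w := fun w => InnerProductSpace.toDual_symm_apply
  have hfK : ∀ w ∈ closure S, f w ≤ f x :=
    fun w hw => closure_minimal (fun a ha => (hf a ha).le)
      (isClosed_le f.continuous continuous_const) hw
  have hray : ∀ t : ℝ, 0 ≤ t → P (x + t • n) = x := fun t ht => by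
    have hnormal : ∀ w ∈ closure S, ⟪x + t • n - x, w - x⟫ ≤ 0 := fun w hw => by
      rw [add_sub_cancel_left, real_inner_smul_left, inner_sub_right, hn, hn]
      exact mul_nonpos_of_nonneg_of_nonpos ht (sub_nonpos.2 (hfK w hw))
    have := norm_sub_le_of_inner_sub_nonpos ((hP (x + t • n)).2 x hxK) (hnormal _ (hP _).1)
    rwa [sub_self, norm_zero, norm_le_zero_iff, sub_eq_zero] at this
  have hn0 : n ≠ 0 := fun h => by
    obtain ⟨a, ha⟩ := hne
    simpa [← hn, h] using hf a ha
  have hxr : ‖x‖ ≤ r := by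
    simpa using closure_minimal hS isClosed_closedBall hxK
  set T := 2 * r / ‖n‖
  have hT : 0 ≤ T := div_nonneg (by linarith [norm_nonneg x]) (norm_nonneg n)
  have hreach : r ∈ Icc ‖x + (0 : ℝ) • n‖ ‖x + T • n‖ := by
    refine ⟨by simpa using hxr, ?_⟩
    have h1 : ‖T • n‖ = 2 * r := by
      rw [norm_smul, Real.norm_of_nonneg hT, div_mul_cancel₀ _ (norm_ne_zero_iff.2 hn0)]
    have h2 := norm_sub_norm_le (T • n) (-x)
    rw [norm_neg, sub_neg_eq_add, add_comm] at h2
    linarith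
  obtain ⟨t, ht, htr⟩ := intermediate_value_Icc hT
    (f := fun t : ℝ => ‖x + t • n‖) (by fun_prop) hreach
  exact ⟨x + t • n, mem_sphere_zero_iff_norm.2 htr, hray t ht.1⟩

end InnerProduct

theorem hausdorffMeasure_sphere_lt_top (x : EuclideanSpace ℝ (Fin 2)) (r : ℝ) :
    μH[1] (sphere x r) < ∞ := by
  set e := Complex.orthonormalBasisOneI.repr
  have hcover : sphere x r ⊆ e '' (circleMap (e.symm x) r '' Ioc 0 (2 * π)) := by
    rw [image_circleMap_Ioc, e.image_sphere, e.apply_symm_apply]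
    intro z hz
    rw [mem_sphere] at hz ⊢
    rw [hz, abs_of_nonneg (hz ▸ dist_nonneg)]
  calc μH[1] (sphere x r) ≤ μH[1] (e '' (circleMap (e.symm x) r '' Ioc 0 (2 * π))) :=
        measure_mono hcover
    _ ≤ (Real.nnabs r : ℝ≥0∞) ^ (1 : ℝ) * μH[1] (Ioc 0 (2 * π)) := by
        rw [e.isometry.hausdorffMeasure_image (Or.inr e.surjective)]
        exact (lipschitzWith_circleMap _ r).hausdorffMeasure_image_le zero_le_one _
    _ < ∞ := by
        rw [hausdorffMeasure_real, Real.volume_Ioc, ENNReal.rpow_one]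
        exact ENNReal.mul_lt_top ENNReal.coe_lt_top ENNReal.ofReal_lt_top

theorem hausdorffMeasure_frontier_lt_top {S : Set (EuclideanSpace ℝ (Fin 2))}
    (hconv : Convex ℝ S) (hopen : IsOpen S) (hbdd : Bornology.IsBounded S) :
    μH[1] (frontier S) < ∞ := by
  obtain ⟨r, hr⟩ := hbdd.subset_closedBall 0
  obtain ⟨P, hP, hcover⟩ := exists_lipschitzWith_one_frontier_subset_image_sphere hconv hopen hr
  calc μH[1] (frontier S) ≤ μH[1] (P '' sphere 0 r) := measure_mono hcover
    _ ≤ 1 ^ (1 : ℝ) * μH[1] (sphere (0 : EuclideanSpace ℝ (Fin 2)) r) :=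
        by exact_mod_cast hP.hausdorffMeasure_image_le zero_le_one _
    _ < ∞ := by simpa using hausdorffMeasure_sphere_lt_top 0 r

theorem IsPreconnected.inter_frontier_nonempty {X : Type*} [TopologicalSpace X] {C s : Set X}
    (hC : IsPreconnected C) (hin : (C ∩ s).Nonempty) (hout : (C \ s).Nonempty) :
    (C ∩ frontier s).Nonempty := by
  by_contra h
  rw [not_nonempty_iff_eq_empty, ← disjoint_iff_inter_eq_empty] at h
  have hcover : C ⊆ interior s ∪ (closure s)ᶜ := fun z hz => by
    by_cases hzs : z ∈ closure s
    · exact Or.inl (by_contra fun hzi => h.notMem_of_mem_left hz ⟨hzs, hzi⟩)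
    · exact Or.inr hzs
  obtain ⟨x, hxC, hxs⟩ := hin
  obtain ⟨y, hyC, hys⟩ := hout
  obtain ⟨z, -, hzi, hzc⟩ := hC _ _ isOpen_interior isClosed_closure.isOpen_compl hcover
    ⟨x, hxC, (hcover hxC).resolve_right (not_not.2 (subset_closure hxs))⟩
    ⟨y, hyC, (hcover hyC).resolve_left fun hyi => hys (interior_subset hyi)⟩
  exact hzc (interior_subset_closure hzi)

theorem ofReal_le_hausdorffMeasure_frontier_inter_upper {S : Set (EuclideanSpace ℝ (Fin 2))}
    (hbdd : Bornology.IsBounded S) {p : EuclideanSpace ℝ (Fin 2)} {ε : ℝ} (hball : ball p ε ⊆ S) :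
    ENNReal.ofReal (2 * ε) ≤ μH[1] (frontier S ∩ {z | p 1 ≤ z 1}) := by
  obtain ⟨R, hR⟩ := hbdd.subset_closedBall 0
  have hproj : Ioo (p 0 - ε) (p 0 + ε) ⊆
      (fun z : EuclideanSpace ℝ (Fin 2) => z 0) '' (frontier S ∩ {z | p 1 ≤ z 1}) := by
    intro c hc
    set v : ℝ → EuclideanSpace ℝ (Fin 2) := fun t => !₂[c, t]
    have hray : IsPreconnected (v '' Ici (p 1)) :=
      isPreconnected_Ici.image v (by fun_prop)
    have hin : v (p 1) ∈ S := hball <| by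
      rw [mem_ball, EuclideanSpace.dist_eq, Fin.sum_univ_two]
      simpa [v, Real.dist_eq, Real.sqrt_sq_eq_abs, abs_sub_lt_iff] using
        ⟨by linarith [hc.2], by linarith [hc.1]⟩
    have hout : v (max (p 1) (R + 1)) ∉ S := fun h => by
      have h1 := mem_closedBall_zero_iff.1 (hR h)
      have h2 := PiLp.norm_apply_le (v (max (p 1) (R + 1))) 1
      rw [show v (max (p 1) (R + 1)) 1 = max (p 1) (R + 1) by simp [v], Real.norm_eq_abs] at h2
      linarith [le_abs_self (max (p 1) (R + 1)), le_max_right (p 1) (R + 1)]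
    obtain ⟨z, ⟨t, ht, rfl⟩, hz⟩ := hray.inter_frontier_nonempty
      ⟨_, mem_image_of_mem v (mem_Ici.2 le_rfl), hin⟩
      ⟨_, mem_image_of_mem v (mem_Ici.2 (le_max_left _ _)), hout⟩
    exact ⟨v t, ⟨hz, by simpa [v] using ht⟩, by simp [v]⟩
  have hlip : LipschitzWith 1 (fun z : EuclideanSpace ℝ (Fin 2) => z 0) :=
    LipschitzWith.of_edist_le fun x y => PiLp.edist_apply_le x y 0
  calc ENNReal.ofReal (2 * ε) = μH[1] (Ioo (p 0 - ε) (p 0 + ε)) := by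
        rw [hausdorffMeasure_real, Real.volume_Ioo]; ring_nf
    _ ≤ μH[1] ((fun z : EuclideanSpace ℝ (Fin 2) => z 0) '' (frontier S ∩ {z | p 1 ≤ z 1})) :=
        measure_mono hproj
    _ ≤ μH[1] (frontier S ∩ {z | p 1 ≤ z 1}) := by
        simpa using hlip.hausdorffMeasure_image_le zero_le_one (frontier S ∩ {z | p 1 ≤ z 1})

theorem frontier_inter_upper_subset {S : Set (EuclideanSpace ℝ (Fin 2))} (hS : S ⊆ halfDisk) :
    frontier S ∩ {z | 0 < z 1} ⊆ frontier S ∩ halfDisk ∪ frontier S ∩ upperSemicircle := by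
  rintro z ⟨hz, hz1⟩
  have hSball : S ⊆ closedBall 0 1 := fun w hw => mem_closedBall_zero_iff.2 (hS hw).1.le
  have hz_le : ‖z‖ ≤ 1 := mem_closedBall_zero_iff.1 <|
    closure_minimal hSball isClosed_closedBall (frontier_subset_closure hz)
  rcases hz_le.lt_or_eq with h | h
  · exact Or.inl ⟨hz, h, hz1⟩
  · exact Or.inr ⟨hz, h, hz1⟩

theorem relabel_energy_neg {a b σ₁₂ σ₁₃ σ₂₃ : ℝ} (hb : 0 ≤ b) (hba : b ≤ a) (ha : 0 < a)
    (h12 : 0 < σ₁₂) (htri : σ₂₃ < σ₁₂ + σ₁₃) : σ₂₃ * b - σ₁₂ * a - σ₁₃ * b < 0 := by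
  rcases hb.eq_or_lt with rfl | hb
  · nlinarith
  · nlinarith

theorem stmt_18_general (S γ₂ γ₃ : Set (EuclideanSpace ℝ (Fin 2)))
    (hSne : S.Nonempty) (hSconv : Convex ℝ S) (hSopen : IsOpen S)
    (hSsub : S ⊆ halfDisk)
    (hnoarc : μH[1] (frontier S ∩ upperSemicircle) = 0)
    (hbdry : frontier S ∩ halfDisk = γ₂ ∪ γ₃)
    (hlen : μH[1] γ₂ ≥ μH[1] γ₃)
    (σ₁₂ σ₁₃ σ₂₃ : ℝ) (h12 : 0 < σ₁₂)
    (htri : σ₂₃ < σ₁₂ + σ₁₃) :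
    σ₂₃ * (μH[1] γ₃).toReal - σ₁₂ * (μH[1] γ₂).toReal -
      σ₁₃ * (μH[1] γ₃).toReal < 0 := by
  obtain ⟨p, hp⟩ := hSne
  obtain ⟨ε, hε, hball⟩ := isOpen_iff.1 hSopen p hp
  have hbdd : Bornology.IsBounded S :=
    isBounded_ball.subset fun z hz => mem_ball_zero_iff.2 (hSsub hz).1
  have hfin : μH[1] (γ₂ ∪ γ₃) ≠ ∞ := by
    refine ne_top_of_le_ne_top (hausdorffMeasure_frontier_lt_top hSconv hSopen hbdd).ne ?_
    exact measure_mono (hbdry ▸ inter_subset_left)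
  have hpos : 0 < μH[1] (γ₂ ∪ γ₃) := calc
    0 < ENNReal.ofReal (2 * ε) := ENNReal.ofReal_pos.2 (by linarith)
    _ ≤ μH[1] (frontier S ∩ {z | p 1 ≤ z 1}) :=
        ofReal_le_hausdorffMeasure_frontier_inter_upper hbdd hball
    _ ≤ μH[1] (frontier S ∩ halfDisk ∪ frontier S ∩ upperSemicircle) :=
        measure_mono <| (inter_subset_inter_right _ fun z hz => (hSsub hp).2.trans_le hz).trans
          (frontier_inter_upper_subset hSsub)
    _ ≤ μH[1] (γ₂ ∪ γ₃) := by
        simpa [hbdry, hnoarc] using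
          measure_union_le (μ := μH[1]) (γ₂ ∪ γ₃) (frontier S ∩ upperSemicircle)
  have h₂fin : μH[1] γ₂ ≠ ∞ := ne_top_of_le_ne_top hfin (measure_mono subset_union_left)
  have h₂pos : μH[1] γ₂ ≠ 0 := fun h₂ =>
    hpos.ne' (measure_union_null h₂ (nonpos_iff_eq_zero.1 (h₂ ▸ hlen)))
  exact relabel_energy_neg ENNReal.toReal_nonneg (ENNReal.toReal_mono h₂fin hlen)
    (ENNReal.toReal_pos h₂pos h₂fin) h12 htri

/-- If a nonempty convex open `S ⊆ B₁⁺` has boundary meeting `∂B₁⁺` in no arc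
of positive length on the semicircle and containing neither boundary segment,
and `∂S ∩ B₁⁺ = γ₂ ∪ γ₃` with `H¹(γ₂) ≥ H¹(γ₃)`, then under the strict
triangle inequality `σ₂₃ < σ₁₂ + σ₁₃` relabeling decreases the energy:
`σ₂₃·H¹(γ₃) − σ₁₂·H¹(γ₂) − σ₁₃·H¹(γ₃) < 0`. -/
theorem stmt_18 (S γ₂ γ₃ : Set (EuclideanSpace ℝ (Fin 2)))
    (hSne : S.Nonempty) (hSconv : Convex ℝ S) (hSopen : IsOpen S)
    (hSsub : S ⊆ halfDisk)
    (hnoarc : μH[1] (frontier S ∩ upperSemicircle) = 0)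
    (hnopos : ¬ posSegment ⊆ frontier S)
    (hnoneg : ¬ negSegment ⊆ frontier S)
    (hbdry : frontier S ∩ halfDisk = γ₂ ∪ γ₃)
    (hlen : μH[1] γ₂ ≥ μH[1] γ₃)
    (σ₁₂ σ₁₃ σ₂₃ : ℝ) (h12 : 0 < σ₁₂) (h13 : 0 < σ₁₃) (h23 : 0 < σ₂₃)
    (htri : σ₂₃ < σ₁₂ + σ₁₃) :
    σ₂₃ * (μH[1] γ₃).toReal - σ₁₂ * (μH[1] γ₂).toReal -
      σ₁₃ * (μH[1] γ₃).toReal < 0 :=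
  stmt_18_general S γ₂ γ₃ hSne hSconv hSopen hSsub hnoarc hbdry hlen σ₁₂ σ₁₃ σ₂₃ h12 htri

end
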